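/- arXiv:1805.07924 — 4 statements merged into one kernel-verified Lean document; each statement's English description precedes it below -/
import Mathlib

section
/- Let M be an invertible real n×n symmetric matrix whose n(n+1)/2 independent entries (the entries on and above the diagonal) are linearly independent over the rationals, and let A be an integer n×n matrix such that A·M is symmetric. Then A is an integer multiple of the identity matrix. -/
/-!
Since `M` is symmetric, `∑ p q, C p q • M p q` is the combination of the upper-triangular entries
`M p q` (`p ≤ q`) with coefficients `C p p` and `C p q + C q p`, so independence forces all of these
to vanish. Symmetry of `A * M` at `(i, j)` is such a relation for the matrix `C` whose row `i` is
row `j` of `A` and whose row `j` is minus row `i` of `A`; its coefficient at `(i, i)` is `A j i`,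
and at `(i, j)` it is `A j j - A i i`.
-/

open Matrix

theorem Fintype.sum_sum_eq_sum_le {ι β : Type*} [Fintype ι] [LinearOrder ι] [AddCommMonoid β]
    (f : ι → ι → β) :
    ∑ p, ∑ q, f p q =
      ∑ t : {p : ι × ι // p.1 ≤ p.2},
        (f t.1.1 t.1.2 + if t.1.1 < t.1.2 then f t.1.2 t.1.1 else 0) := by
  rw [← Fintype.sum_prod_type', ← Fintype.sum_subtype_add_sum_subtype (fun p : ι × ι => p.1 ≤ p.2),
    Finset.sum_add_distrib]
  congr 1
  calc ∑ t : {p : ι × ι // ¬ p.1 ≤ p.2}, f t.1.1 t.1.2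
      = ∑ p ∈ {p : ι × ι | ¬ p.1 ≤ p.2}, f p.1 p.2 :=
        (Finset.sum_subtype _ (fun _ => by simp) (fun p : ι × ι => f p.1 p.2)).symm
    _ = ∑ p ∈ {p : ι × ι | p.1 ≤ p.2 ∧ p.1 < p.2}, f p.2 p.1 := by
      refine Finset.sum_equiv (Equiv.prodComm ι ι) (fun p => ?_) (fun _ _ => rfl)
      simp only [Finset.mem_filter, Finset.mem_univ, true_and, not_le, Equiv.prodComm_apply,
        Prod.fst_swap, Prod.snd_swap]
      exact ⟨fun h => ⟨h.le, h⟩, And.right⟩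
    _ = ∑ p ∈ {p : ι × ι | p.1 ≤ p.2}, if p.1 < p.2 then f p.2 p.1 else 0 := by
      rw [← Finset.filter_filter, Finset.sum_filter]
    _ = _ := Finset.sum_subtype _ (fun _ => by simp)
      (fun p : ι × ι => if p.1 < p.2 then f p.2 p.1 else 0)

theorem Matrix.exists_eq_smul_one_of_forall_ne {ι R : Type*} [DecidableEq ι] [MulZeroOneClass R]
    {A : Matrix ι ι R} (hoff : ∀ i j, i ≠ j → A i j = 0) (hdiag : ∀ i j, A i i = A j j) :
    ∃ c : R, A = c • 1 := by
  cases isEmpty_or_nonempty ι with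
  | inl => exact ⟨0, Subsingleton.elim _ _⟩
  | inr h =>
    obtain ⟨i₀⟩ := h
    refine ⟨A i₀ i₀, ext fun i j => ?_⟩
    rcases eq_or_ne i j with rfl | hij
    · simp [hdiag i i₀]
    · simp [hoff i j hij, hij]

namespace Matrix

variable {ι R V : Type*} [Fintype ι] [LinearOrder ι] [Ring R] [AddCommGroup V] [Module R V]
  {M : Matrix ι ι V}

theorem diag_eq_zero_and_add_transpose_eq_zero_of_sum_smul_eq_zero (hM : Mᵀ = M)
    (hli : LinearIndependent R fun t : {p : ι × ι // p.1 ≤ p.2} => M t.1.1 t.1.2)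
    {C : Matrix ι ι R} (hC : ∑ p, ∑ q, C p q • M p q = 0) :
    C.diag = 0 ∧ C + Cᵀ = 0 := by
  rw [Fintype.sum_sum_eq_sum_le] at hC
  have hcoeff := Fintype.linearIndependent_iff.mp hli
    (fun t => C t.1.1 t.1.2 + if t.1.1 < t.1.2 then C t.1.2 t.1.1 else 0) (by
      rw [← hC]
      refine Fintype.sum_congr _ _ fun t => ?_
      rw [add_smul, ite_smul, zero_smul, ← transpose_apply M t.1.1, hM])
  have hdiag (p : ι) : C p p = 0 := by simpa using hcoeff ⟨(p, p), le_rfl⟩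
  refine ⟨funext hdiag, ext fun p q => ?_⟩
  rcases lt_trichotomy p q with h | rfl | h
  · simpa [h] using hcoeff ⟨(p, q), h.le⟩
  · simp [hdiag]
  · simpa [h, add_comm] using hcoeff ⟨(q, p), h.le⟩

theorem exists_eq_smul_one_of_sum_smul_symm (hM : Mᵀ = M)
    (hli : LinearIndependent R fun t : {p : ι × ι // p.1 ≤ p.2} => M t.1.1 t.1.2)
    {A : Matrix ι ι R} (hAM : ∀ i j, ∑ k, A i k • M k j = ∑ k, A j k • M k i) :
    ∃ c : R, A = c • 1 := by
  have hMs (a b : ι) : M a b = M b a := congrFun₂ hM b a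
  have key (i j : ι) := diag_eq_zero_and_add_transpose_eq_zero_of_sum_smul_eq_zero hM hli
    (C := of fun p q => (if p = i then A j q else 0) - if p = j then A i q else 0) (by
      simp only [of_apply, sub_smul, ite_smul, zero_smul, Finset.sum_sub_distrib,
        Finset.sum_ite_irrel, Finset.sum_const_zero, Finset.sum_ite_eq', Finset.mem_univ, if_true]
      simp_rw [hMs i, hMs j]
      rw [hAM j i, sub_self])
  refine exists_eq_smul_one_of_forall_ne (fun i j hij => ?_) (fun i j => ?_)
  · simpa [hij.symm] using congrFun (key j i).1 j
  · rcases eq_or_ne i j with rfl | hij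
    · rfl
    · have := congrFun₂ (key i j).2 i j
      simp only [add_apply, transpose_apply, of_apply, zero_apply, ↓reduceIte, hij, hij.symm,
        sub_zero, zero_sub] at this
      exact (add_neg_eq_zero.mp this).symm

end Matrix

theorem stmt0_general {n : ℕ} (M : Matrix (Fin n) (Fin n) ℝ)
    (hMsymm : Mᵀ = M)
    (hMirr : LinearIndependent ℚ
      (fun p : {p : Fin n × Fin n // p.1 ≤ p.2} => M p.1.1 p.1.2))
    (A : Matrix (Fin n) (Fin n) ℤ)
    (hAM : ((A.map (Int.cast : ℤ → ℝ)) * M)ᵀ = (A.map (Int.cast : ℤ → ℝ)) * M) :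
    ∃ c : ℤ, A = c • (1 : Matrix (Fin n) (Fin n) ℤ) :=
  exists_eq_smul_one_of_sum_smul_symm hMsymm (hMirr.restrict_scalars' ℤ) fun i j => by
    simpa [mul_apply, zsmul_eq_mul] using congrFun₂ hAM j i

/-- If `M` is an invertible real symmetric `n × n` matrix whose entries on and
above the diagonal are linearly independent over `ℚ`, and `A` is an integer matrix such that
`A·M` is symmetric, then `A` is an integer multiple of the identity. -/
theorem stmt0 {n : ℕ} (M : Matrix (Fin n) (Fin n) ℝ)
    (hMsymm : Mᵀ = M) (hMinv : IsUnit M.det)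
    (hMirr : LinearIndependent ℚ
      (fun p : {p : Fin n × Fin n // p.1 ≤ p.2} => M p.1.1 p.1.2))
    (A : Matrix (Fin n) (Fin n) ℤ)
    (hAM : ((A.map (Int.cast : ℤ → ℝ)) * M)ᵀ = (A.map (Int.cast : ℤ → ℝ)) * M) :
    ∃ c : ℤ, A = c • (1 : Matrix (Fin n) (Fin n) ℤ) :=
  stmt0_general M hMsymm hMirr A hAM
end

section
/- Let M be an invertible, indefinite, real symmetric n×n matrix whose entries on and above the diagonal are linearly independent over ℚ. Then there is no integer n×n matrix A such that A·M is symmetric and positive definite. -/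
/-!
Symmetry of `A M` says `∑ p, A i p * M p j = ∑ p, A j p * M p i` for all `i, j`: a rational
linear relation among the entries of `M`. Since the entries `M p q` with `p ≤ q` are
`ℚ`-linearly independent, all these relations are trivial, which forces `A` to be a scalar
matrix `c • 1`. But then `A M = c • M` cannot be positive definite, because `M` is indefinite.
-/

open Matrix Finset

theorem Finset.sum_univ_prod_eq_sum_le {ι M : Type*} [Fintype ι] [LinearOrder ι]
    [AddCommMonoid M] (f : ι × ι → M) :
    ∑ x, f x = ∑ s : {x : ι × ι // x.1 ≤ x.2},
      (f s + if s.1.1 < s.1.2 then f s.1.swap else 0) := by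
  have hle (x : ι × ι) : x ∈ univ.filter (fun x : ι × ι => x.1 ≤ x.2) ↔ x.1 ≤ x.2 := by simp
  rw [Finset.sum_add_distrib, ← Finset.sum_subtype _ hle f,
    ← Finset.sum_subtype _ hle (fun x => if x.1 < x.2 then f x.swap else 0),
    ← Finset.sum_filter_add_sum_filter_not univ (fun x : ι × ι => x.1 ≤ x.2) f]
  congr 1
  rw [Finset.sum_filter, Finset.sum_filter]
  refine Finset.sum_equiv (Equiv.prodComm ι ι) (by simp) fun x _ => ?_
  rcases lt_trichotomy x.1 x.2 with h | h | h
  · simp [h.not_ge, h.le]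
  · simp [h]
  · simp [h, h.le, h.not_ge]

namespace Matrix

variable {ι : Type*} [Fintype ι]

section LinearOrder

variable [LinearOrder ι] {M : Matrix ι ι ℝ} (hM : Mᵀ = M)
  (hM_indep : LinearIndependent ℚ (fun s : {x : ι × ι // x.1 ≤ x.2} => M s.1.1 s.1.2))
include hM hM_indep

theorem add_transpose_eq_zero_of_sum_mul_eq_zero {C : Matrix ι ι ℚ}
    (hC : ∑ x : ι × ι, (C x.1 x.2 : ℝ) * M x.1 x.2 = 0) : C + Cᵀ = 0 := by
  -- the coefficient of `M p q`, `p ≤ q`, once `M q p` is rewritten as `M p q`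
  have hcoef := Fintype.linearIndependent_iff.mp hM_indep
    (fun s => C s.1.1 s.1.2 + if s.1.1 < s.1.2 then C s.1.2 s.1.1 else 0) <| by
      rw [← hC, Finset.sum_univ_prod_eq_sum_le]
      refine Finset.sum_congr rfl fun s _ => ?_
      have hswap : M s.1.2 s.1.1 = M s.1.1 s.1.2 := congr_fun₂ hM s.1.1 s.1.2
      split_ifs <;> simp [Rat.smul_def, hswap, add_mul]
  ext p q
  rcases lt_trichotomy p q with h | rfl | h
  · simpa [h] using hcoef ⟨(p, q), h.le⟩
  · simpa using hcoef ⟨(p, p), le_rfl⟩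
  · simpa [h, add_comm] using hcoef ⟨(q, p), h.le⟩

theorem exists_eq_scalar_of_mul_transpose_eq {A : Matrix ι ι ℚ}
    (hA : (A.map (Rat.cast : ℚ → ℝ) * M)ᵀ = A.map (Rat.cast : ℚ → ℝ) * M) :
    ∃ c : ℚ, A = scalar ι c := by
  have hanti (i j p q : ι) :
      ((if q = j then A i p else 0) - (if p = i then A j q else 0)) +
        ((if p = j then A i q else 0) - (if q = i then A j p else 0)) = 0 := by
    -- chosen so that `∑ C p q * M p q = (A M) i j - (A M) j i`
    set C : Matrix ι ι ℚ :=
      of fun p q => (if q = j then A i p else 0) - (if p = i then A j q else 0)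
    have hC : ∑ x : ι × ι, (C x.1 x.2 : ℝ) * M x.1 x.2 = 0 := by
      have hij := congr_fun₂ hA j i
      simp only [transpose_apply, mul_apply, map_apply] at hij
      have hMij (q : ι) : M i q = M q i := congr_fun₂ hM q i
      simp [C, Fintype.sum_prod_type, sub_mul, apply_ite (Rat.cast : ℚ → ℝ), ite_mul,
        Finset.sum_sub_distrib, hMij, hij]
    exact congr_fun₂ (add_transpose_eq_zero_of_sum_mul_eq_zero hM hM_indep hC) p q
  have hdiag (i j : ι) : A i i = A j j := by
    by_cases hij : i = j
    · rw [hij]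
    · simpa [hij, Ne.symm hij, sub_eq_zero] using hanti i j i j
  rcases isEmpty_or_nonempty ι with hι | ⟨⟨k⟩⟩
  · exact ⟨0, Subsingleton.elim _ _⟩
  refine ⟨A k k, ?_⟩
  ext i j
  by_cases hij : i = j
  · simp [hij, hdiag j k]
  · simpa [hij, Ne.symm hij] using hanti i j j j

end LinearOrder

theorem not_posDef_smul_of_indefinite {M : Matrix ι ι ℝ}
    (hpos : ∃ x, 0 < x ⬝ᵥ M *ᵥ x) (hneg : ∃ x, x ⬝ᵥ M *ᵥ x < 0) (c : ℝ) :
    ¬ (c • M).PosDef := by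
  intro hcM
  have hquad {x : ι → ℝ} (hx : x ≠ 0) : 0 < c * (x ⬝ᵥ M *ᵥ x) := by
    simpa [smul_mulVec, dotProduct_smul] using hcM.dotProduct_mulVec_pos hx
  obtain ⟨v, hv⟩ := hpos
  obtain ⟨w, hw⟩ := hneg
  have hv0 : v ≠ 0 := by rintro rfl; simp at hv
  have hw0 : w ≠ 0 := by rintro rfl; simp at hw
  nlinarith [hquad hv0, hquad hw0]

end Matrix

theorem stmt1_general {n : ℕ} (M : Matrix (Fin n) (Fin n) ℝ)
    (hMsymm : Mᵀ = M)
    (hMindef : (∃ x : Fin n → ℝ, 0 < x ⬝ᵥ M.mulVec x) ∧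
      (∃ x : Fin n → ℝ, x ⬝ᵥ M.mulVec x < 0))
    (hMirr : LinearIndependent ℚ
      (fun p : {p : Fin n × Fin n // p.1 ≤ p.2} => M p.1.1 p.1.2)) :
    ¬ ∃ A : Matrix (Fin n) (Fin n) ℤ,
        ((A.map (Int.cast : ℤ → ℝ)) * M)ᵀ = (A.map (Int.cast : ℤ → ℝ)) * M ∧
        ((A.map (Int.cast : ℤ → ℝ)) * M).PosDef := by
  rintro ⟨A, hsymm, hposdef⟩
  have hcast :
      A.map (Int.cast : ℤ → ℝ) = (A.map (Int.cast : ℤ → ℚ)).map (Rat.cast : ℚ → ℝ) := by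
    ext; simp
  rw [hcast] at hsymm hposdef
  obtain ⟨c, hc⟩ := exists_eq_scalar_of_mul_transpose_eq hMsymm hMirr hsymm
  have hAM : (scalar (Fin n) c).map (Rat.cast : ℚ → ℝ) * M = (c : ℝ) • M := by
    simp [smul_eq_diagonal_mul]
  rw [hc, hAM] at hposdef
  exact not_posDef_smul_of_indefinite hMindef.1 hMindef.2 c hposdef

/-- If `M` is an invertible, indefinite, real symmetric `n × n` matrix whose
entries on and above the diagonal are linearly independent over `ℚ`, then there is no integer
matrix `A` such that `A·M` is symmetric and positive definite. -/
theorem stmt1 {n : ℕ} (M : Matrix (Fin n) (Fin n) ℝ)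
    (hMsymm : Mᵀ = M) (hMinv : IsUnit M.det)
    (hMindef : (∃ x : Fin n → ℝ, 0 < x ⬝ᵥ M.mulVec x) ∧
      (∃ x : Fin n → ℝ, x ⬝ᵥ M.mulVec x < 0))
    (hMirr : LinearIndependent ℚ
      (fun p : {p : Fin n × Fin n // p.1 ≤ p.2} => M p.1.1 p.1.2)) :
    ¬ ∃ A : Matrix (Fin n) (Fin n) ℤ,
        ((A.map (Int.cast : ℤ → ℝ)) * M)ᵀ = (A.map (Int.cast : ℤ → ℝ)) * M ∧
        ((A.map (Int.cast : ℤ → ℝ)) * M).PosDef :=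
  stmt1_general M hMsymm hMindef hMirr
end

section
/- Let ℓ₁, ℓ₂, ℓ₃ > 0 and consider the subspace H = {(a₁,a₂,a₃) ∈ ℝ³ : a₁+a₂+a₃ = 0} with the bilinear form given by restricting diag(ℓ₁, −ℓ₂, ℓ₃). This form on H has signature (+,−) (i.e., is nondegenerate and indefinite) if and only if ℓ₂ > (ℓ₁⁻¹ + ℓ₃⁻¹)⁻¹. -/
/-!
The vectors `u = (1, 0, -1)` and `w = (ℓ₃, -(ℓ₁ + ℓ₃), ℓ₁)` form a `B`-orthogonal basis of the
plane `H`, with `B u u = ℓ₁ + ℓ₃ > 0` and `B w w = (ℓ₁ + ℓ₃) δ`, where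
`δ = ℓ₁ℓ₃ - ℓ₂(ℓ₁ + ℓ₃)` is the Gram determinant of `B` on `H`. So `B` has signature `(+,−)` on `H`
exactly when `δ < 0`, i.e. when `ℓ₂ > ℓ₁ℓ₃ / (ℓ₁ + ℓ₃) = (ℓ₁⁻¹ + ℓ₃⁻¹)⁻¹`.
-/

namespace SignatureOnSumZeroPlane

variable {l1 l2 l3 : ℝ} {B : (Fin 3 → ℝ) → (Fin 3 → ℝ) → ℝ}

theorem add_mul_apply_self_eq
    (hB : ∀ a b, B a b = l1 * a 0 * b 0 - l2 * a 1 * b 1 + l3 * a 2 * b 2)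
    {a : Fin 3 → ℝ} (ha : a 0 + a 1 + a 2 = 0) :
    (l1 + l3) * B a a = (l1 * a 0 - l3 * a 2) ^ 2 + (l1 * l3 - l2 * (l1 + l3)) * (a 0 + a 2) ^ 2 := by
  rw [hB, show a 1 = -(a 0 + a 2) by linarith]
  ring

theorem gramDet_neg_of_apply_self_neg
    (hB : ∀ a b, B a b = l1 * a 0 * b 0 - l2 * a 1 * b 1 + l3 * a 2 * b 2)
    (h13 : 0 < l1 + l3) {a : Fin 3 → ℝ} (ha : a 0 + a 1 + a 2 = 0) (hneg : B a a < 0) :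
    l1 * l3 - l2 * (l1 + l3) < 0 := by
  have hsum : (l1 + l3) * B a a < 0 := mul_neg_of_pos_of_neg h13 hneg
  rw [add_mul_apply_self_eq hB ha] at hsum
  by_contra! hdet
  nlinarith [sq_nonneg (l1 * a 0 - l3 * a 2), mul_nonneg hdet (sq_nonneg (a 0 + a 2))]

theorem exists_apply_self_pos
    (hB : ∀ a b, B a b = l1 * a 0 * b 0 - l2 * a 1 * b 1 + l3 * a 2 * b 2) (h13 : 0 < l1 + l3) :
    ∃ a : Fin 3 → ℝ, a 0 + a 1 + a 2 = 0 ∧ 0 < B a a :=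
  ⟨![1, 0, -1], by simp, by simpa [hB] using h13⟩

theorem exists_apply_self_neg
    (hB : ∀ a b, B a b = l1 * a 0 * b 0 - l2 * a 1 * b 1 + l3 * a 2 * b 2) (h13 : 0 < l1 + l3)
    (hdet : l1 * l3 - l2 * (l1 + l3) < 0) :
    ∃ a : Fin 3 → ℝ, a 0 + a 1 + a 2 = 0 ∧ B a a < 0 := by
  refine ⟨![l3, -(l1 + l3), l1], by simp, ?_⟩
  have hw : B ![l3, -(l1 + l3), l1] ![l3, -(l1 + l3), l1]
      = (l1 + l3) * (l1 * l3 - l2 * (l1 + l3)) := by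
    simp [hB]; ring
  rw [hw]
  exact mul_neg_of_pos_of_neg h13 hdet

theorem eq_zero_of_forall_apply_eq_zero
    (hB : ∀ a b, B a b = l1 * a 0 * b 0 - l2 * a 1 * b 1 + l3 * a 2 * b 2) (h13 : l1 + l3 ≠ 0)
    (hdet : l1 * l3 - l2 * (l1 + l3) ≠ 0) {a : Fin 3 → ℝ} (ha : a 0 + a 1 + a 2 = 0)
    (hker : ∀ b : Fin 3 → ℝ, b 0 + b 1 + b 2 = 0 → B a b = 0) : a = 0 := by
  have hu : l1 * a 0 - l3 * a 2 = 0 := by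
    have := hker ![1, 0, -1] (by simp)
    simp only [hB, Matrix.cons_val_zero, Matrix.cons_val_one, Matrix.cons_val] at this
    linear_combination this
  have hw : (l1 * l3 - l2 * (l1 + l3)) * (a 0 + a 2) = 0 := by
    have := hker ![l3, -(l1 + l3), l1] (by simp)
    simp only [hB, Matrix.cons_val_zero, Matrix.cons_val_one, Matrix.cons_val] at this
    linear_combination this - l2 * (l1 + l3) * ha
  have h02 : a 0 + a 2 = 0 := (mul_eq_zero.mp hw).resolve_left hdet
  have h0 : a 0 = 0 := by
    have : (l1 + l3) * a 0 = 0 := by linear_combination hu + l3 * h02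
    exact (mul_eq_zero.mp this).resolve_left h13
  ext i
  fin_cases i <;> simp <;> linarith

theorem inv_add_inv_inv_lt_iff (h1 : 0 < l1) (h3 : 0 < l3) :
    (l1⁻¹ + l3⁻¹)⁻¹ < l2 ↔ l1 * l3 - l2 * (l1 + l3) < 0 := by
  have h13 : 0 < l1 + l3 := add_pos h1 h3
  rw [show (l1⁻¹ + l3⁻¹)⁻¹ = l1 * l3 / (l1 + l3) by field_simp; ring, div_lt_iff₀ h13, sub_neg]

end SignatureOnSumZeroPlane

open SignatureOnSumZeroPlane in
theorem stmt4_general (l1 l2 l3 : ℝ) (h1 : 0 < l1) (h3 : 0 < l3)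
    (B : (Fin 3 → ℝ) → (Fin 3 → ℝ) → ℝ)
    (hB : ∀ a b, B a b = l1 * a 0 * b 0 - l2 * a 1 * b 1 + l3 * a 2 * b 2) :
    ((∃ a : Fin 3 → ℝ, a 0 + a 1 + a 2 = 0 ∧ 0 < B a a) ∧
     (∃ a : Fin 3 → ℝ, a 0 + a 1 + a 2 = 0 ∧ B a a < 0) ∧
     (∀ a : Fin 3 → ℝ, a 0 + a 1 + a 2 = 0 →
       (∀ b : Fin 3 → ℝ, b 0 + b 1 + b 2 = 0 → B a b = 0) → a = 0))
    ↔ (l1⁻¹ + l3⁻¹)⁻¹ < l2 := by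
  have h13 : 0 < l1 + l3 := add_pos h1 h3
  rw [inv_add_inv_inv_lt_iff h1 h3]
  constructor
  · rintro ⟨-, ⟨a, ha, hneg⟩, -⟩
    exact gramDet_neg_of_apply_self_neg hB h13 ha hneg
  · intro hdet
    exact ⟨exists_apply_self_pos hB h13, exists_apply_self_neg hB h13 hdet,
      fun a ha hker => eq_zero_of_forall_apply_eq_zero hB h13.ne' hdet.ne ha hker⟩

/-- For positive reals `ℓ₁, ℓ₂, ℓ₃`, the restriction of the bilinear form
`diag(ℓ₁, −ℓ₂, ℓ₃)` to the plane `{a ∈ ℝ³ : a₀ + a₁ + a₂ = 0}` has signature `(+,−)`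
(i.e. is indefinite and nondegenerate) if and only if `ℓ₂ > (ℓ₁⁻¹ + ℓ₃⁻¹)⁻¹`. -/
theorem stmt4 (l1 l2 l3 : ℝ) (h1 : 0 < l1) (h2 : 0 < l2) (h3 : 0 < l3)
    (B : (Fin 3 → ℝ) → (Fin 3 → ℝ) → ℝ)
    (hB : ∀ a b, B a b = l1 * a 0 * b 0 - l2 * a 1 * b 1 + l3 * a 2 * b 2) :
    ((∃ a : Fin 3 → ℝ, a 0 + a 1 + a 2 = 0 ∧ 0 < B a a) ∧
     (∃ a : Fin 3 → ℝ, a 0 + a 1 + a 2 = 0 ∧ B a a < 0) ∧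
     (∀ a : Fin 3 → ℝ, a 0 + a 1 + a 2 = 0 →
       (∀ b : Fin 3 → ℝ, b 0 + b 1 + b 2 = 0 → B a b = 0) → a = 0))
    ↔ (l1⁻¹ + l3⁻¹)⁻¹ < l2 :=
  stmt4_general l1 l2 l3 h1 h3 B hB
end

section
/- Let V be a finite-dimensional real inner product space, Λ ⊂ V* a subgroup, k > 0, and c : Γ → Λ a map from a group Γ of translations such that Λ + k·c(γ) = Λ and δ : Λ → ℝ satisfies δ(α + k·c(γ)) = δ(α) for all γ ∈ Γ, α ∈ Λ. Define f(v) = sup_{α ∈ Λ} { α(v) − |α^♯|²/(2k) + δ(α) } where α^♯ is the metric dual. Then for every γ ∈ Γ, f(v + s(γ)) − f(v) = k·c(γ)(v) + k·|s(γ)|²/2, where s(γ) = c(γ)^♯; in particular the difference is an affine function of v. -/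
/-!
Reindexing `Λ` by `α ↦ α + k • c γ` completes the square: the term of `α + k • c γ` at `v + c γ`
equals the term of `α` at `v` plus `k ⟪c γ, v⟫ + k ‖c γ‖² / 2`, a constant independent of `α`.
So the two families of terms differ by a translation of `ℝ`, which commutes with `sSup`.
-/

theorem csSup_image_add_const {s : Set ℝ} (hne : s.Nonempty) (hbdd : BddAbove s) (a : ℝ) :
    sSup ((· + a) '' s) = sSup s + a :=
  ((OrderIso.addRight a).map_csSup' hne hbdd).symm

section

variable {V : Type} [NormedAddCommGroup V] [InnerProductSpace ℝ V] {k : ℝ}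

theorem inner_add_smul_sub_norm_add_smul_sq_div (hk : k ≠ 0) (α v w : V) :
    (inner ℝ (α + k • w) (v + w) : ℝ) - ‖α + k • w‖ ^ 2 / (2 * k)
      = (inner ℝ α v : ℝ) - ‖α‖ ^ 2 / (2 * k) + (k * (inner ℝ w v : ℝ) + k * ‖w‖ ^ 2 / 2) := by
  have hnorm : ‖α + k • w‖ ^ 2 = ‖α‖ ^ 2 + 2 * k * (inner ℝ α w : ℝ) + k ^ 2 * ‖w‖ ^ 2 := by
    rw [norm_add_sq_real, real_inner_smul_right, norm_smul, mul_pow, Real.norm_eq_abs, sq_abs]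
    ring
  rw [hnorm, inner_add_right, inner_add_left, inner_add_left, real_inner_smul_left,
    real_inner_smul_left, real_inner_self_eq_norm_sq]
  field_simp
  ring

theorem image_add_eq_image_add_const (hk : k ≠ 0) {Λ : Set V} {w : V} {δ : V → ℝ}
    (hshift : (· + k • w) '' Λ = Λ) (hδ : ∀ α ∈ Λ, δ (α + k • w) = δ α) (v : V) :
    (fun α => (inner ℝ α (v + w) : ℝ) - ‖α‖ ^ 2 / (2 * k) + δ α) '' Λ
      = (· + (k * (inner ℝ w v : ℝ) + k * ‖w‖ ^ 2 / 2)) ''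
          ((fun α => (inner ℝ α v : ℝ) - ‖α‖ ^ 2 / (2 * k) + δ α) '' Λ) := by
  conv_lhs => rw [← hshift]
  rw [Set.image_image, Set.image_image]
  refine Set.image_congr fun α hα => ?_
  rw [hδ α hα, inner_add_smul_sub_norm_add_smul_sq_div hk]
  ring

end

theorem stmt6_general {V : Type} [NormedAddCommGroup V] [InnerProductSpace ℝ V]
    {Γ : Type} (Λ : Set V) (hΛ : Λ.Nonempty)
    (k : ℝ) (hk : 0 < k) (c : Γ → V)
    (hshift : ∀ γ : Γ, (fun α => α + k • c γ) '' Λ = Λ)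
    (δ : V → ℝ) (hδ : ∀ γ : Γ, ∀ α ∈ Λ, δ (α + k • c γ) = δ α)
    (f : V → ℝ)
    (hf : ∀ v, f v = sSup ((fun α => (inner ℝ α v : ℝ) - ‖α‖ ^ 2 / (2 * k) + δ α) '' Λ))
    (hbdd : ∀ v, BddAbove ((fun α => (inner ℝ α v : ℝ) - ‖α‖ ^ 2 / (2 * k) + δ α) '' Λ)) :
    ∀ (γ : Γ) (v : V),
      f (v + c γ) - f v = k * (inner ℝ (c γ) v : ℝ) + k * ‖c γ‖ ^ 2 / 2 := by
  intro γ v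
  rw [hf, hf, image_add_eq_image_add_const hk.ne' (hshift γ) (hδ γ),
    csSup_image_add_const (hΛ.image _) (hbdd v)]
  ring

/-- Quasi-periodicity of the theta-type piecewise-affine function.  Let `V` be a
finite-dimensional real inner product space (identifying `V*` with `V` via the metric, so that a
covector `α` acts by `⟪α, ·⟫` and `α^♯ = α`).  Let `Λ ⊆ V` be a nonempty subset, `k > 0`,
`c : Γ → V` with `Λ + k·c(γ) = Λ`, and `δ : V → ℝ` with `δ(α + k·c(γ)) = δ(α)` for `α ∈ Λ`.
Define `f(v) = sup_{α ∈ Λ} (⟪α,v⟫ − ‖α‖²/(2k) + δ(α))`.  Then for every `γ` and `v`,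
`f(v + c(γ)) − f(v) = k·⟪c(γ),v⟫ + k·‖c(γ)‖²/2`; in particular this difference is an affine
function of `v`. -/
theorem stmt6 {V : Type} [NormedAddCommGroup V] [InnerProductSpace ℝ V]
    [FiniteDimensional ℝ V] {Γ : Type} (Λ : Set V) (hΛ : Λ.Nonempty)
    (k : ℝ) (hk : 0 < k) (c : Γ → V)
    (hshift : ∀ γ : Γ, (fun α => α + k • c γ) '' Λ = Λ)
    (δ : V → ℝ) (hδ : ∀ γ : Γ, ∀ α ∈ Λ, δ (α + k • c γ) = δ α)
    (f : V → ℝ)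
    (hf : ∀ v, f v = sSup ((fun α => (inner ℝ α v : ℝ) - ‖α‖ ^ 2 / (2 * k) + δ α) '' Λ))
    (hbdd : ∀ v, BddAbove ((fun α => (inner ℝ α v : ℝ) - ‖α‖ ^ 2 / (2 * k) + δ α) '' Λ)) :
    ∀ (γ : Γ) (v : V),
      f (v + c γ) - f v = k * (inner ℝ (c γ) v : ℝ) + k * ‖c γ‖ ^ 2 / 2 :=
  stmt6_general Λ hΛ k hk c hshift δ hδ f hf hbdd
end
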